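/- Impossibility theorem, part 1 (Features 1 and 2 exclude Feature 3): Let H_W and H_S be Hermitian matrices on ℂ^{d_W} and ℂ^{d_S}, kT > 0, and let {φ_x}_{x∈X} (|X| = d_S) be an orthonormal basis of ℂ^{d_S} consisting of eigenvectors of H_S (the post-measurement states of a repeatable, energy-conserving measurement). For each x ∈ X let U_x be a unitary on ℂ^{d_W} ⊗ ℂ^{d_S} with [U_x, H_W ⊗ 1 + 1 ⊗ H_S] = 0, let ρ_W be a density matrix on ℂ^{d_W}, set ρ'_{W,x} := tr₂[U_x(ρ_W ⊗ |φ_x⟩⟨φ_x|)U_x†] and W_x := F_{H_W}(ρ'_{W,x}) − F_{H_W}(ρ_W). If S(ρ'_{W,x}) = S(ρ_W) for all x ∈ X, then there exists x ∈ X with W_x ≤ 0. -/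

import Mathlib

open Matrix
open scoped Kronecker Matrix ComplexOrder

noncomputable section

/-- A density matrix: positive semidefinite with unit trace. -/
def IsDensityMatrix {n : Type*} [Fintype n] (ρ : Matrix n n ℂ) : Prop :=
  ρ.PosSemidef ∧ ρ.trace = 1

/-- von Neumann entropy `S(ρ) = -∑ λᵢ log λᵢ` (junk value 0 if not Hermitian). -/
noncomputable def vnEntropy {n : Type*} [Fintype n] [DecidableEq n]
    (ρ : Matrix n n ℂ) : ℝ :=
  if h : ρ.IsHermitian then -∑ i, (h.eigenvalues i) * Real.log (h.eigenvalues i) else 0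

/-- Non-equilibrium free energy `F(ρ) = tr(Hρ) - kT S(ρ)`. -/
noncomputable def freeEnergy {n : Type*} [Fintype n] [DecidableEq n]
    (kT : ℝ) (H ρ : Matrix n n ℂ) : ℝ :=
  (Matrix.trace (H * ρ)).re - kT * vnEntropy ρ

/-- Least eigenvalue of a Hermitian matrix (junk value 0 if not Hermitian). -/
noncomputable def lambdaMin {n : Type*} [Fintype n] [DecidableEq n]
    (H : Matrix n n ℂ) : ℝ :=
  if h : H.IsHermitian then ⨅ i, h.eigenvalues i else 0

/-- Partial trace over the second tensor factor. -/
def ptrace2 {m n : Type*} [Fintype n]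
    (σ : Matrix (m × n) (m × n) ℂ) : Matrix m m ℂ :=
  fun i j => ∑ k, σ (i, k) (j, k)

/-- Partial trace over the first tensor factor. -/
def ptrace1 {m n : Type*} [Fintype m]
    (σ : Matrix (m × n) (m × n) ℂ) : Matrix n n ℂ :=
  fun k l => ∑ i, σ (i, k) (i, l)

/-- Outer product `|v⟩⟨v|`. -/
def outer {n : Type*} (v : n → ℂ) : Matrix n n ℂ :=
  Matrix.vecMulVec v (star v)

/-- Kronecker product of vectors. -/
def kronVec {m n : Type*} (v : m → ℂ) (w : n → ℂ) : m × n → ℂ :=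
  fun p => v p.1 * w p.2

/-!
Take the outcome `x₀` whose energy `μ x₀` is the least eigenvalue of `H_S`. The unitary conserves
the total energy, so the weight gains exactly `μ x₀ - tr(H_S τ)`, where `τ` is the final state of
the system; this is `≤ 0` because `τ` is a density matrix and `μ x₀` is the least eigenvalue.
Since the entropy of the weight is unchanged, its free energy changes by its energy change.
-/

section PartialTrace

variable {m n : Type*}

lemma ptrace1_eq_sum_submatrix [Fintype m] (σ : Matrix (m × n) (m × n) ℂ) :
    ptrace1 σ = ∑ i, σ.submatrix (Prod.mk i) (Prod.mk i) := by
  ext k l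
  simp [ptrace1, Matrix.sum_apply]

lemma Matrix.PosSemidef.ptrace1 [Fintype m] {σ : Matrix (m × n) (m × n) ℂ} (hσ : σ.PosSemidef) :
    (ptrace1 σ).PosSemidef := by
  rw [ptrace1_eq_sum_submatrix]
  exact posSemidef_sum _ fun i _ => hσ.submatrix _

lemma trace_ptrace1 [Fintype m] [Fintype n] (σ : Matrix (m × n) (m × n) ℂ) :
    (ptrace1 σ).trace = σ.trace := by
  simp only [trace, diag, ptrace1, Fintype.sum_prod_type]
  exact Finset.sum_comm

lemma ptrace2_kronecker [Fintype n] (ρ : Matrix m m ℂ) (P : Matrix n n ℂ) :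
    ptrace2 (ρ ⊗ₖ P) = P.trace • ρ := by
  ext i j
  simp [ptrace2, trace, Finset.mul_sum, mul_comm]

lemma ptrace1_kronecker [Fintype m] (ρ : Matrix m m ℂ) (P : Matrix n n ℂ) :
    ptrace1 (ρ ⊗ₖ P) = ρ.trace • P := by
  ext k l
  simp [ptrace1, trace, Finset.sum_mul]

lemma trace_kronecker_one_mul [Fintype m] [Fintype n] [DecidableEq n] (A : Matrix m m ℂ)
    (σ : Matrix (m × n) (m × n) ℂ) :
    ((A ⊗ₖ (1 : Matrix n n ℂ)) * σ).trace = (A * ptrace2 σ).trace := by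
  simp only [trace, diag, mul_apply, ptrace2, kroneckerMap_apply, one_apply,
    Fintype.sum_prod_type, mul_ite, mul_one, mul_zero, ite_mul, zero_mul,
    Finset.sum_ite_eq, Finset.mem_univ, if_true, Finset.mul_sum]
  exact Finset.sum_congr rfl fun i _ => Finset.sum_comm

lemma trace_one_kronecker_mul [Fintype m] [Fintype n] [DecidableEq m] (B : Matrix n n ℂ)
    (σ : Matrix (m × n) (m × n) ℂ) :
    (((1 : Matrix m m ℂ) ⊗ₖ B) * σ).trace = (B * ptrace1 σ).trace := by
  simp only [trace, diag, mul_apply, ptrace1, kroneckerMap_apply, one_apply,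
    Fintype.sum_prod_type, ite_mul, one_mul, zero_mul, Finset.mul_sum]
  rw [Finset.sum_comm]
  refine Finset.sum_congr rfl fun k _ => ?_
  refine (Finset.sum_congr rfl fun i _ => Finset.sum_comm).trans ?_
  simp only [Finset.sum_ite_eq, Finset.mem_univ, if_true]
  exact Finset.sum_comm

lemma trace_kronecker_add_mul [Fintype m] [Fintype n] [DecidableEq m] [DecidableEq n]
    (A : Matrix m m ℂ) (B : Matrix n n ℂ) (σ : Matrix (m × n) (m × n) ℂ) :
    ((A ⊗ₖ (1 : Matrix n n ℂ) + (1 : Matrix m m ℂ) ⊗ₖ B) * σ).trace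
      = (A * ptrace2 σ).trace + (B * ptrace1 σ).trace := by
  rw [add_mul, trace_add, trace_kronecker_one_mul, trace_one_kronecker_mul]

end PartialTrace

lemma trace_mul_conj_unitary_of_commute {n : Type*} [Fintype n] [DecidableEq n]
    {E U : Matrix n n ℂ} (hU : U ∈ unitaryGroup n ℂ) (hUE : U * E = E * U)
    (σ : Matrix n n ℂ) : (E * (U * σ * Uᴴ)).trace = (E * σ).trace := by
  have hU' : Uᴴ * U = 1 := Unitary.star_mul_self_of_mem hU
  rw [← Matrix.mul_assoc, ← Matrix.mul_assoc, ← hUE, trace_mul_cycle,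
    ← Matrix.mul_assoc Uᴴ, hU', Matrix.one_mul]

lemma trace_mul_outer {n : Type*} [Fintype n] (A : Matrix n n ℂ) (v : n → ℂ) :
    (A * outer v).trace = star v ⬝ᵥ A *ᵥ v := by
  simp only [trace, diag, mul_apply, outer, vecMulVec_apply, dotProduct, mulVec,
    Pi.star_apply, Finset.mul_sum]
  refine Finset.sum_congr rfl fun i _ => Finset.sum_congr rfl fun j _ => ?_
  ring

section Orthonormal

variable {n X : Type*} [Fintype n] [DecidableEq n] [Fintype X] [DecidableEq X]
  {φ : X → n → ℂ}

lemma trace_eq_sum_dotProduct_mulVec (hcard : Fintype.card X = Fintype.card n)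
    (hφ : ∀ x y, star (φ x) ⬝ᵥ φ y = if x = y then 1 else 0) (M : Matrix n n ℂ) :
    M.trace = ∑ x, star (φ x) ⬝ᵥ M *ᵥ φ x := by
  let V : Matrix n X ℂ := of fun i x => φ x i
  have hV : Vᴴ * V = 1 := by
    ext x y
    simpa [V, mul_apply, one_apply, dotProduct] using hφ x y
  have hV' : V * Vᴴ = 1 := (mul_eq_one_comm_of_card_eq _ _ _ hcard).mp hV
  calc M.trace = (Vᴴ * M * V).trace := by rw [trace_mul_cycle, hV', Matrix.one_mul]
    _ = ∑ x, star (φ x) ⬝ᵥ M *ᵥ φ x := by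
      refine Finset.sum_congr rfl fun x _ => ?_
      simp only [diag, mul_apply, conjTranspose_apply, V, of_apply, dotProduct, mulVec,
        Pi.star_apply, Finset.sum_mul, Finset.mul_sum]
      rw [Finset.sum_comm]
      refine Finset.sum_congr rfl fun i _ => Finset.sum_congr rfl fun j _ => ?_
      ring

lemma trace_mul_eq_sum_eigenvalue_mul (hcard : Fintype.card X = Fintype.card n)
    (hφ : ∀ x y, star (φ x) ⬝ᵥ φ y = if x = y then 1 else 0) {H : Matrix n n ℂ}
    {μ : X → ℝ} (hμ : ∀ x, H *ᵥ φ x = (μ x : ℂ) • φ x) (τ : Matrix n n ℂ) :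
    (H * τ).trace = ∑ x, (μ x : ℂ) * (star (φ x) ⬝ᵥ τ *ᵥ φ x) := by
  rw [trace_mul_comm, trace_eq_sum_dotProduct_mulVec hcard hφ]
  refine Finset.sum_congr rfl fun x _ => ?_
  rw [← mulVec_mulVec, hμ, mulVec_smul, dotProduct_smul, smul_eq_mul]

lemma le_re_trace_mul_of_eigenbasis (hcard : Fintype.card X = Fintype.card n)
    (hφ : ∀ x y, star (φ x) ⬝ᵥ φ y = if x = y then 1 else 0) {H τ : Matrix n n ℂ}
    (hτ : τ.PosSemidef) (htr : τ.trace = 1) {μ : X → ℝ}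
    (hμ : ∀ x, H *ᵥ φ x = (μ x : ℂ) • φ x) {c : ℝ} (hc : ∀ x, c ≤ μ x) :
    c ≤ (H * τ).trace.re := by
  have hle : (c : ℂ) ≤ (H * τ).trace := by
    calc (c : ℂ) = ∑ x, (c : ℂ) * (star (φ x) ⬝ᵥ τ *ᵥ φ x) := by
          rw [← Finset.mul_sum, ← trace_eq_sum_dotProduct_mulVec hcard hφ, htr, mul_one]
      _ ≤ ∑ x, (μ x : ℂ) * (star (φ x) ⬝ᵥ τ *ᵥ φ x) :=
          Finset.sum_le_sum fun x _ => mul_le_mul_of_nonneg_right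
            (Complex.real_le_real.mpr (hc x)) (hτ.dotProduct_mulVec_nonneg _)
      _ = (H * τ).trace := (trace_mul_eq_sum_eigenvalue_mul hcard hφ hμ τ).symm
  exact (Complex.le_def.mp hle).1

end Orthonormal

lemma freeEnergy_sub_freeEnergy_of_vnEntropy_eq {n : Type*} [Fintype n] [DecidableEq n]
    (kT : ℝ) (H : Matrix n n ℂ) {ρ σ : Matrix n n ℂ} (h : vnEntropy ρ = vnEntropy σ) :
    freeEnergy kT H ρ - freeEnergy kT H σ = (H * ρ).trace.re - (H * σ).trace.re := by
  simp only [freeEnergy, h]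
  ring

theorem features_one_two_exclude_three_general
    {dW dS : ℕ} {X : Type*} [Fintype X] [DecidableEq X]
    (hdS : 0 < dS)
    (HW : Matrix (Fin dW) (Fin dW) ℂ) (HS : Matrix (Fin dS) (Fin dS) ℂ)
    (kT : ℝ)
    (φ : X → (Fin dS → ℂ))
    (hcard : Fintype.card X = dS)
    (hφON : ∀ x y, star (φ x) ⬝ᵥ φ y = if x = y then 1 else 0)
    (hφeig : ∀ x, ∃ μ : ℝ, HS.mulVec (φ x) = (μ : ℂ) • φ x)
    (U : X → Matrix (Fin dW × Fin dS) (Fin dW × Fin dS) ℂ)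
    (hU : ∀ x, U x ∈ Matrix.unitaryGroup (Fin dW × Fin dS) ℂ)
    (hUcomm : ∀ x, U x * (HW ⊗ₖ (1 : Matrix (Fin dS) (Fin dS) ℂ)
        + (1 : Matrix (Fin dW) (Fin dW) ℂ) ⊗ₖ HS)
      = (HW ⊗ₖ (1 : Matrix (Fin dS) (Fin dS) ℂ)
        + (1 : Matrix (Fin dW) (Fin dW) ℂ) ⊗ₖ HS) * U x)
    (ρW : Matrix (Fin dW) (Fin dW) ℂ) (hρW : IsDensityMatrix ρW)
    (hS : ∀ x, vnEntropy (ptrace2 (U x * (ρW ⊗ₖ outer (φ x)) * (U x)ᴴ))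
        = vnEntropy ρW) :
    ∃ x, freeEnergy kT HW (ptrace2 (U x * (ρW ⊗ₖ outer (φ x)) * (U x)ᴴ))
        - freeEnergy kT HW ρW ≤ 0 := by
  choose μ hμ using hφeig
  have : Nonempty X := Fintype.card_pos_iff.mp (hcard ▸ hdS)
  obtain ⟨x₀, -, hx₀⟩ := Finset.exists_min_image Finset.univ μ Finset.univ_nonempty
  refine ⟨x₀, ?_⟩
  set σ := U x₀ * (ρW ⊗ₖ outer (φ x₀)) * (U x₀)ᴴ
  have hφ₀ : star (φ x₀) ⬝ᵥ φ x₀ = 1 := by simpa using hφON x₀ x₀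
  have hP : (outer (φ x₀)).trace = 1 := by simpa [hφ₀] using trace_mul_outer 1 (φ x₀)
  have hσ : σ.PosSemidef :=
    (hρW.1.kronecker (posSemidef_vecMulVec_self_star _)).mul_mul_conjTranspose_same _
  have hσtr : (ptrace1 σ).trace = 1 := by
    have hU₀ : (U x₀)ᴴ * U x₀ = 1 := Unitary.star_mul_self_of_mem (hU x₀)
    rw [trace_ptrace1, trace_mul_cycle, hU₀, Matrix.one_mul,
      trace_kronecker, hρW.2, hP, one_mul]
  have hconserve : (HW * ptrace2 σ).trace + (HS * ptrace1 σ).trace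
      = (HW * ρW).trace + μ x₀ := by
    rw [← trace_kronecker_add_mul, trace_mul_conj_unitary_of_commute (hU x₀) (hUcomm x₀),
      trace_kronecker_add_mul, ptrace2_kronecker, ptrace1_kronecker, hP, hρW.2, one_smul,
      one_smul, trace_mul_outer, hμ, dotProduct_smul, hφ₀, smul_eq_mul, mul_one]
  have hbound : μ x₀ ≤ (HS * ptrace1 σ).trace.re :=
    le_re_trace_mul_of_eigenbasis (by simpa using hcard) hφON hσ.ptrace1 hσtr hμ
      fun x => hx₀ x (Finset.mem_univ x)
  have hconserve_re := congrArg Complex.re hconserve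
  simp only [Complex.add_re, Complex.ofReal_re] at hconserve_re
  rw [freeEnergy_sub_freeEnergy_of_vnEntropy_eq kT HW (hS x₀)]
  linarith

/-- Impossibility theorem, part 1: repeatable measurement (Feature 1) plus
invariant weight entropy (Feature 2) preclude strictly positive work extraction
for all outcomes (Feature 3). -/
theorem features_one_two_exclude_three
    {dW dS : ℕ} {X : Type*} [Fintype X] [DecidableEq X]
    (hdS : 0 < dS)
    (HW : Matrix (Fin dW) (Fin dW) ℂ) (HS : Matrix (Fin dS) (Fin dS) ℂ)
    (hHW : HW.IsHermitian) (hHS : HS.IsHermitian)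
    (kT : ℝ) (hkT : 0 < kT)
    (φ : X → (Fin dS → ℂ))
    (hcard : Fintype.card X = dS)
    (hφON : ∀ x y, star (φ x) ⬝ᵥ φ y = if x = y then 1 else 0)
    (hφeig : ∀ x, ∃ μ : ℝ, HS.mulVec (φ x) = (μ : ℂ) • φ x)
    (U : X → Matrix (Fin dW × Fin dS) (Fin dW × Fin dS) ℂ)
    (hU : ∀ x, U x ∈ Matrix.unitaryGroup (Fin dW × Fin dS) ℂ)
    (hUcomm : ∀ x, U x * (HW ⊗ₖ (1 : Matrix (Fin dS) (Fin dS) ℂ)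
        + (1 : Matrix (Fin dW) (Fin dW) ℂ) ⊗ₖ HS)
      = (HW ⊗ₖ (1 : Matrix (Fin dS) (Fin dS) ℂ)
        + (1 : Matrix (Fin dW) (Fin dW) ℂ) ⊗ₖ HS) * U x)
    (ρW : Matrix (Fin dW) (Fin dW) ℂ) (hρW : IsDensityMatrix ρW)
    (hS : ∀ x, vnEntropy (ptrace2 (U x * (ρW ⊗ₖ outer (φ x)) * (U x)ᴴ))
        = vnEntropy ρW) :
    ∃ x, freeEnergy kT HW (ptrace2 (U x * (ρW ⊗ₖ outer (φ x)) * (U x)ᴴ))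
        - freeEnergy kT HW ρW ≤ 0 :=
  features_one_two_exclude_three_general hdS HW HS kT φ hcard hφON hφeig U hU hUcomm ρW hρW hS
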